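/- Let q ≥ 2, let λ, ν : Fin q → ℂ satisfy λ_0 = ν_0 = 1 and λ_i ≠ 0, ν_j ≠ 0 for all i, j. Let v be a q×q matrix whose 0th row and 0th column are zero, define v' as the q×q matrix with v'_{i,j} = −v_{i,j} / (λ_i² ν_j²), let v'₁ be the (q−1)×(q−1) matrix with (v'₁)_{i,j} = v'_{i+1,j+1}, and assume v'₁ is invertible. Then there is ε > 0 such that for all s with 0 < |s| < ε the matrix x_s := (λ ⊗ ν) + s • v has all entries nonzero and its Hadamard inverse J(x_s) is invertible, and the limit as s → 0 of s • (J(x_s))⁻¹ equals B * W * A, where W is the q×q matrix with zero 0th row and 0th column and W_{i,j} = ((v'₁)⁻¹)_{i−1,j−1} for i, j ≥ 1. (This is the formula of Proposition 2.1 for the action of K = I ∘ J on the exceptional divisor over the rank-one matrices.) -/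

import Mathlib

/-- The Hadamard (entrywise) inverse of a matrix. -/
noncomputable def hadamardInv {q : ℕ} (x : Matrix (Fin q) (Fin q) ℂ) :
    Matrix (Fin q) (Fin q) ℂ :=
  Matrix.of fun i j => (x i j)⁻¹

/-- The unipotent lower-triangular matrix `A` of (2.6): `A_{i,i} = 1`, `A_{i,0} = −λ_i⁻¹`
for `i ≠ 0`, all other entries `0`. -/
noncomputable def matA {q : ℕ} (hq : 0 < q) (lam : Fin q → ℂ) : Matrix (Fin q) (Fin q) ℂ :=
  Matrix.of fun i j => if i = j then 1 else if j = ⟨0, hq⟩ then -(lam i)⁻¹ else 0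

/-- The unipotent upper-triangular matrix `B` of (2.6): `B_{j,j} = 1`, `B_{0,j} = −ν_j⁻¹`
for `j ≠ 0`, all other entries `0`. -/
noncomputable def matB {q : ℕ} (hq : 0 < q) (nu : Fin q → ℂ) : Matrix (Fin q) (Fin q) ℂ :=
  Matrix.of fun i j => if i = j then 1 else if i = ⟨0, hq⟩ then -(nu j)⁻¹ else 0

/-- The lower-right `(q−1)×(q−1)` block of a `q×q` matrix: `(v₁)_{i,j} = v_{i+1,j+1}`. -/
def lowerBlock {q : ℕ} (v : Matrix (Fin q) (Fin q) ℂ) :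
    Matrix (Fin (q - 1)) (Fin (q - 1)) ℂ :=
  Matrix.of fun i j =>
    v ⟨i.1 + 1, by have := i.2; omega⟩ ⟨j.1 + 1, by have := j.2; omega⟩

/-- The `q×q` matrix with vanishing `0`th row and column whose lower-right block is `m`. -/
def matW {q : ℕ} (hq : 2 ≤ q) (m : Matrix (Fin (q - 1)) (Fin (q - 1)) ℂ) :
    Matrix (Fin q) (Fin q) ℂ :=
  Matrix.of fun i j =>
    if i.1 = 0 ∨ j.1 = 0 then 0
    else m ⟨i.1 - 1, by have := i.2; omega⟩ ⟨j.1 - 1, by have := j.2; omega⟩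

namespace HadamardAux

open Matrix Filter Topology

/-- `q×q` matrix `diag(1, m)`. -/
def oneB {n : ℕ} (m : Matrix (Fin n) (Fin n) ℂ) : Matrix (Fin (n+1)) (Fin (n+1)) ℂ :=
  Matrix.of fun i j =>
    Fin.cases (motive := fun _ => ℂ)
      (Fin.cases (motive := fun _ => ℂ) (1:ℂ) (fun _ => 0) j)
      (fun i' => Fin.cases (motive := fun _ => ℂ) 0 (fun j' => m i' j') j) i

@[simp] lemma oneB_zz {n : ℕ} (m : Matrix (Fin n) (Fin n) ℂ) : oneB m 0 0 = 1 := by simp [oneB]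
@[simp] lemma oneB_zs {n : ℕ} (m : Matrix (Fin n) (Fin n) ℂ) (j : Fin n) :
    oneB m 0 j.succ = 0 := by simp [oneB]
@[simp] lemma oneB_sz {n : ℕ} (m : Matrix (Fin n) (Fin n) ℂ) (i : Fin n) :
    oneB m i.succ 0 = 0 := by simp [oneB]
@[simp] lemma oneB_ss {n : ℕ} (m : Matrix (Fin n) (Fin n) ℂ) (i j : Fin n) :
    oneB m i.succ j.succ = m i j := by simp [oneB]

lemma oneB_one {n : ℕ} : oneB (1 : Matrix (Fin n) (Fin n) ℂ) = 1 := by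
  ext i j
  induction i using Fin.cases with
  | zero =>
    induction j using Fin.cases with
    | zero => simp
    | succ j => simp [Matrix.one_apply, (Fin.succ_ne_zero j).symm]
  | succ i =>
    induction j using Fin.cases with
    | zero => simp [Matrix.one_apply, Fin.succ_ne_zero i]
    | succ j => simp [Matrix.one_apply, Fin.succ_inj]

lemma oneB_mul {n : ℕ} (m m' : Matrix (Fin n) (Fin n) ℂ) :
    oneB m * oneB m' = oneB (m * m') := by
  ext i j
  rw [Matrix.mul_apply, Fin.sum_univ_succ]
  induction i using Fin.cases with
  | zero =>
    induction j using Fin.cases with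
    | zero => simp
    | succ j => simp
  | succ i =>
    induction j using Fin.cases with
    | zero => simp
    | succ j => simp [Matrix.mul_apply]

lemma oneB_mul_inv {n : ℕ} {m : Matrix (Fin n) (Fin n) ℂ} (h : IsUnit m.det) :
    oneB m * oneB m⁻¹ = 1 := by
  rw [oneB_mul, Matrix.mul_nonsing_inv _ h, oneB_one]

lemma oneB_inv_mul {n : ℕ} {m : Matrix (Fin n) (Fin n) ℂ} (h : IsUnit m.det) :
    oneB m⁻¹ * oneB m = 1 := by
  rw [oneB_mul, Matrix.nonsing_inv_mul _ h, oneB_one]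

lemma isUnit_oneB {n : ℕ} {m : Matrix (Fin n) (Fin n) ℂ} (h : IsUnit m.det) :
    IsUnit (oneB m) :=
  ⟨⟨oneB m, oneB m⁻¹, oneB_mul_inv h, oneB_inv_mul h⟩, rfl⟩

lemma oneB_inv {n : ℕ} {m : Matrix (Fin n) (Fin n) ℂ} (h : IsUnit m.det) :
    (oneB m)⁻¹ = oneB m⁻¹ :=
  Matrix.inv_eq_right_inv (oneB_mul_inv h)

lemma matA_mul_apply {n : ℕ} (h : 0 < n+1) (lam : Fin (n+1) → ℂ)
    (M : Matrix (Fin (n+1)) (Fin (n+1)) ℂ) (i j : Fin (n+1)) :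
    (matA h lam * M) i j = M i j + (if i = 0 then 0 else -(lam i)⁻¹ * M 0 j) := by
  rw [Matrix.mul_apply]
  have key : ∀ k, matA h lam i k * M k j
      = (if i = k then M k j else 0)
        + (if (0:Fin (n+1)) = k then (if i = 0 then 0 else -(lam i)⁻¹ * M 0 j) else 0) := by
    intro k
    simp only [matA, Matrix.of_apply, Fin.zero_eta]
    rcases eq_or_ne i k with rfl | hik
    · rcases eq_or_ne i 0 with rfl | hi0
      · simp
      · simp [hi0, Ne.symm hi0]
    · rcases eq_or_ne k 0 with rfl | hk0
      · simp [hik, Ne.symm hik]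
      · simp [hik, hk0, Ne.symm hk0]
  rw [Finset.sum_congr rfl (fun k _ => key k), Finset.sum_add_distrib,
    Finset.sum_ite_eq, Finset.sum_ite_eq]
  simp

lemma mul_matB_apply {n : ℕ} (h : 0 < n+1) (nu : Fin (n+1) → ℂ)
    (M : Matrix (Fin (n+1)) (Fin (n+1)) ℂ) (i j : Fin (n+1)) :
    (M * matB h nu) i j = M i j + (if j = 0 then 0 else M i 0 * -(nu j)⁻¹) := by
  rw [Matrix.mul_apply]
  have key : ∀ l, M i l * matB h nu l j
      = (if j = l then M i l else 0)
        + (if (0:Fin (n+1)) = l then (if j = 0 then 0 else M i 0 * -(nu j)⁻¹) else 0) := by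
    intro l
    simp only [matB, Matrix.of_apply, Fin.zero_eta]
    rcases eq_or_ne l j with rfl | hlj
    · rcases eq_or_ne l 0 with rfl | hl0
      · simp
      · simp [hl0, Ne.symm hl0]
    · rcases eq_or_ne l 0 with rfl | hl0
      · simp [hlj, Ne.symm hlj]
      · simp [hlj, hl0, Ne.symm hlj, Ne.symm hl0]
  rw [Finset.sum_congr rfl (fun l _ => key l), Finset.sum_add_distrib,
    Finset.sum_ite_eq, Finset.sum_ite_eq]
  simp

lemma matA_neg_mul {n : ℕ} (h : 0 < n+1) (lam : Fin (n+1) → ℂ) :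
    matA h (fun i => -(lam i)) * matA h lam = 1 := by
  ext i j
  rw [matA_mul_apply]
  rcases eq_or_ne i 0 with rfl | hi
  · simp only [matA, Matrix.of_apply, Matrix.one_apply, Fin.zero_eta, if_pos rfl, if_true]
    by_cases hj : j = 0 <;> simp [hj, eq_comm]
  · rcases eq_or_ne j 0 with rfl | hj
    · simp [matA, Matrix.one_apply, Fin.zero_eta, hi, Ne.symm hi, inv_neg]
    · simp [matA, Matrix.one_apply, Fin.zero_eta, hi, hj, Ne.symm hj]

lemma matB_mul_neg {n : ℕ} (h : 0 < n+1) (nu : Fin (n+1) → ℂ) :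
    matB h nu * matB h (fun j => -(nu j)) = 1 := by
  ext i j
  rw [mul_matB_apply]
  rcases eq_or_ne j 0 with rfl | hj
  · simp only [matB, Matrix.of_apply, Matrix.one_apply, Fin.zero_eta, if_pos rfl, if_true]
    by_cases hi : i = 0 <;> simp [hi, eq_comm]
  · rcases eq_or_ne i 0 with rfl | hi
    · simp [matB, Matrix.one_apply, Fin.zero_eta, hj, Ne.symm hj, inv_neg]
    · simp [matB, Matrix.one_apply, Fin.zero_eta, hi, hj, Ne.symm hj, Ne.symm hi]

lemma matA_mul_neg {n : ℕ} (h : 0 < n+1) (lam : Fin (n+1) → ℂ) :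
    matA h lam * matA h (fun i => -(lam i)) = 1 := by
  have := matA_neg_mul h (fun i => -(lam i))
  simpa using this

lemma matB_neg_mul {n : ℕ} (h : 0 < n+1) (nu : Fin (n+1) → ℂ) :
    matB h (fun j => -(nu j)) * matB h nu = 1 := by
  have := matB_mul_neg h (fun j => -(nu j))
  simpa using this

/-- The matrix `C(s)` with entries `-v_{ij}/((λ_iν_j + s v_{ij}) λ_iν_j)`. -/
noncomputable def Cm {p : ℕ} (lam nu : Fin (p+2) → ℂ) (v : Matrix (Fin (p+2)) (Fin (p+2)) ℂ)
    (s : ℂ) : Matrix (Fin (p+2)) (Fin (p+2)) ℂ :=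
  Matrix.of fun i j => -(v i j) / ((lam i * nu j + s * v i j) * (lam i * nu j))

/-- Its lower-right block. -/
noncomputable def Cb {p : ℕ} (lam nu : Fin (p+2) → ℂ) (v : Matrix (Fin (p+2)) (Fin (p+2)) ℂ)
    (s : ℂ) : Matrix (Fin (p+1)) (Fin (p+1)) ℂ :=
  lowerBlock (Cm lam nu v s)

lemma scalar_key (a b s w : ℂ) (ha : a ≠ 0) (hb : b ≠ 0) (hd : a*b + s*w ≠ 0) :
    (a*b + s*w)⁻¹ + -a⁻¹ * b⁻¹ + (a⁻¹ + -a⁻¹ * 1⁻¹) * -b⁻¹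
      = s * (-w / ((a*b + s*w) * (a*b))) := by
  rw [inv_one]
  field_simp
  ring

lemma key_eq {p : ℕ} (h1 : 0 < p + 2) (lam nu : Fin (p+2) → ℂ)
    (v : Matrix (Fin (p+2)) (Fin (p+2)) ℂ) (s : ℂ)
    (hlam0 : lam 0 = 1) (hnu0 : nu 0 = 1)
    (hlam : ∀ i, lam i ≠ 0) (hnu : ∀ j, nu j ≠ 0)
    (hvrow : ∀ j, v 0 j = 0) (hvcol : ∀ i, v i 0 = 0)
    (hden : ∀ i j, lam i * nu j + s * v i j ≠ 0) :
    matA h1 lam * hadamardInv (Matrix.vecMulVec lam nu + s • v) * matB h1 nu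
      = oneB (s • Cb lam nu v s) := by
  have hJ : ∀ i j, hadamardInv (Matrix.vecMulVec lam nu + s • v) i j
      = (lam i * nu j + s * v i j)⁻¹ := by
    intro i j
    simp [hadamardInv, Matrix.vecMulVec_apply, Matrix.add_apply, Matrix.smul_apply,
      smul_eq_mul]
  ext i j
  rw [mul_matB_apply, matA_mul_apply, matA_mul_apply]
  induction i using Fin.cases with
  | zero =>
    induction j using Fin.cases with
    | zero => simp [hJ, hlam0, hnu0, hvrow]
    | succ j =>
      simp [hJ, hlam0, hnu0, hvrow, Fin.succ_ne_zero, hnu]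
  | succ i =>
    induction j using Fin.cases with
    | zero =>
      simp [hJ, hlam0, hnu0, hvrow, hvcol, Fin.succ_ne_zero, hlam]
    | succ j =>
      have e1 : oneB (s • Cb lam nu v s) i.succ j.succ = s * ((Cb lam nu v s) i j) := by simp
      rw [e1]
      have e2 : (Cb lam nu v s) i j
          = -(v i.succ j.succ) / ((lam i.succ * nu j.succ + s * v i.succ j.succ)
              * (lam i.succ * nu j.succ)) := rfl
      rw [e2]
      simp only [hJ, hlam0, hnu0, hvrow, hvcol, Fin.succ_ne_zero, if_neg, ite_false,
        mul_one, one_mul, mul_zero, add_zero]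
      exact scalar_key _ _ _ _ (hlam i.succ) (hnu j.succ) (hden i.succ j.succ)

lemma smul_oneB {p : ℕ} (hq : 2 ≤ p + 2) (s : ℂ) (hs : s ≠ 0)
    (X : Matrix (Fin (p+1)) (Fin (p+1)) ℂ) :
    s • oneB (s⁻¹ • X)
      = Matrix.of (fun i j : Fin (p+2) => if i = 0 ∧ j = 0 then s else 0) + matW hq X := by
  ext i j
  rw [Matrix.add_apply, Matrix.smul_apply]
  induction i using Fin.cases with
  | zero =>
    induction j using Fin.cases with
    | zero => simp [matW]
    | succ j => simp [matW, Fin.succ_ne_zero]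
  | succ i =>
    induction j using Fin.cases with
    | zero => simp [matW, Fin.succ_ne_zero]
    | succ j =>
      have hW : matW hq X i.succ j.succ = X i j := by
        simp only [matW, Matrix.of_apply, Fin.val_succ]
        rw [if_neg (by omega)]
        congr 1
      simp [hW, Fin.succ_ne_zero, smul_eq_mul, ← mul_assoc, mul_inv_cancel₀ hs]

lemma msmul_inv {n : ℕ} {s : ℂ} (hs : s ≠ 0) {m : Matrix (Fin n) (Fin n) ℂ}
    (hm : IsUnit m.det) : (s • m)⁻¹ = s⁻¹ • m⁻¹ := by
  apply Matrix.inv_eq_right_inv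
  rw [Matrix.smul_mul, Matrix.mul_smul, smul_smul, mul_inv_cancel₀ hs, one_smul,
    Matrix.mul_nonsing_inv _ hm]

lemma isUnit_smul_mat {n : ℕ} {s : ℂ} (hs : s ≠ 0) {m : Matrix (Fin n) (Fin n) ℂ}
    (hm : IsUnit m.det) : IsUnit (s • m).det := by
  rw [Matrix.det_smul]
  exact (IsUnit.pow _ (isUnit_iff_ne_zero.2 hs)).mul hm

end HadamardAux

open HadamardAux Matrix in
open Filter Topology in
/-- Proposition 2.1: with `x_s = λ ⊗ ν + s • v`, for all small `s ≠ 0` the entries of `x_s`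
are nonzero and its Hadamard inverse is invertible, and
`s • (J(x_s))⁻¹ → B * W * A` as `s → 0`, where `W = diag(0, (v'₁)⁻¹)` and
`v'_{i,j} = −v_{i,j}/(λ_i² ν_j²)`. -/
theorem smul_inv_hadamardInv_tendsto (q : ℕ) (hq : 2 ≤ q)
    (lam nu : Fin q → ℂ)
    (hlam0 : lam ⟨0, by omega⟩ = 1) (hnu0 : nu ⟨0, by omega⟩ = 1)
    (hlam : ∀ i, lam i ≠ 0) (hnu : ∀ j, nu j ≠ 0)
    (v : Matrix (Fin q) (Fin q) ℂ)
    (hvrow : ∀ j, v ⟨0, by omega⟩ j = 0) (hvcol : ∀ i, v i ⟨0, by omega⟩ = 0)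
    (hv'1 : IsUnit (lowerBlock (Matrix.of fun i j => -(v i j) / ((lam i) ^ 2 * (nu j) ^ 2)))) :
    ∃ ε > (0 : ℝ),
      (∀ s : ℂ, 0 < ‖s‖ → ‖s‖ < ε →
        (∀ i j, (Matrix.vecMulVec lam nu + s • v) i j ≠ 0) ∧
        IsUnit (hadamardInv (Matrix.vecMulVec lam nu + s • v))) ∧
      Tendsto (fun s : ℂ => s • (hadamardInv (Matrix.vecMulVec lam nu + s • v))⁻¹)
        (𝓝[≠] 0)
        (𝓝 (matB (by omega) nu *
              matW hq (lowerBlock (Matrix.of fun i j => -(v i j) / ((lam i) ^ 2 * (nu j) ^ 2)))⁻¹ *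
              matA (by omega) lam)) := by
  obtain ⟨p, rfl⟩ : ∃ p, q = p + 2 := ⟨q - 2, by omega⟩
  simp only [Fin.zero_eta] at hlam0 hnu0 hvrow hvcol
  have h1 : 0 < p + 2 := by omega
  set V1 : Matrix (Fin (p+1)) (Fin (p+1)) ℂ :=
    lowerBlock (Matrix.of fun i j => -(v i j) / ((lam i) ^ 2 * (nu j) ^ 2)) with hV1
  have hC0 : Cb lam nu v 0 = V1 := by
    ext i j
    show -(v _ _) / ((lam _ * nu _ + 0 * v _ _) * (lam _ * nu _)) = -(v _ _) / _
    rw [zero_mul, add_zero]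
    congr 1
    ring
  have hdet0 : (Cb lam nu v 0).det ≠ 0 := by
    rw [hC0]
    exact ((Matrix.isUnit_iff_isUnit_det _).1 hv'1).ne_zero
  -- continuity of Cb and its inverse
  have hCbc : Tendsto (fun s => Cb lam nu v s) (𝓝 0) (𝓝 (Cb lam nu v 0)) := by
    refine tendsto_pi_nhds.2 fun i => tendsto_pi_nhds.2 fun j => ?_
    have hden : (lam (Fin.succ ⟨i.1, i.2⟩) * nu (Fin.succ ⟨j.1, j.2⟩)
        + (0:ℂ) * v (Fin.succ ⟨i.1, i.2⟩) (Fin.succ ⟨j.1, j.2⟩))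
        * (lam (Fin.succ ⟨i.1, i.2⟩) * nu (Fin.succ ⟨j.1, j.2⟩)) ≠ 0 := by
      simp [hlam, hnu, mul_ne_zero]
    exact Tendsto.div tendsto_const_nhds
      (((tendsto_const_nhds.add (tendsto_id.mul tendsto_const_nhds)).mul
        tendsto_const_nhds)) hden
  have hdetc : Tendsto (fun s => (Cb lam nu v s).det) (𝓝 0) (𝓝 ((Cb lam nu v 0).det)) :=
    ((Continuous.matrix_det continuous_id).tendsto _).comp hCbc
  have hadjc : Tendsto (fun s => (Cb lam nu v s).adjugate) (𝓝 0)
      (𝓝 ((Cb lam nu v 0).adjugate)) :=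
    ((Continuous.matrix_adjugate continuous_id).tendsto _).comp hCbc
  have hinvc : Tendsto (fun s => (Cb lam nu v s)⁻¹) (𝓝 0) (𝓝 ((Cb lam nu v 0)⁻¹)) := by
    have hfor : ∀ s : ℂ, (Cb lam nu v s)⁻¹
        = ((Cb lam nu v s).det)⁻¹ • (Cb lam nu v s).adjugate := fun s => by
      rw [Matrix.inv_def, Ring.inverse_eq_inv']
    simp only [hfor]
    exact (hdetc.inv₀ hdet0).smul hadjc
  -- eventual good behaviour
  have hev : ∀ᶠ s in 𝓝 (0:ℂ),
      (∀ i j, lam i * nu j + s * v i j ≠ 0) ∧ (Cb lam nu v s).det ≠ 0 := by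
    refine Filter.Eventually.and ?_ (hdetc.eventually_ne hdet0)
    rw [eventually_all]
    intro i
    rw [eventually_all]
    intro j
    have ht : Tendsto (fun s : ℂ => lam i * nu j + s * v i j) (𝓝 0)
        (𝓝 (lam i * nu j + 0 * v i j)) :=
      tendsto_const_nhds.add (tendsto_id.mul tendsto_const_nhds)
    exact ht.eventually_ne (by simp [hlam i, hnu j, mul_ne_zero])
  -- the main algebraic identity
  have main : ∀ s : ℂ, s ≠ 0 → (∀ i j, lam i * nu j + s * v i j ≠ 0) →
      (Cb lam nu v s).det ≠ 0 →
      IsUnit (hadamardInv (Matrix.vecMulVec lam nu + s • v)) ∧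
      s • (hadamardInv (Matrix.vecMulVec lam nu + s • v))⁻¹
        = matB h1 nu * (Matrix.of (fun i j : Fin (p+2) => if i = 0 ∧ j = 0 then s else 0)
            + matW hq ((Cb lam nu v s)⁻¹)) * matA h1 lam := by
    intro s hs hden hdet
    have hk := key_eq h1 lam nu v s hlam0 hnu0 hlam hnu hvrow hvcol hden
    have hCu : IsUnit (Cb lam nu v s).det := isUnit_iff_ne_zero.2 hdet
    have hsCu : IsUnit (s • Cb lam nu v s).det := isUnit_smul_mat hs hCu
    have hJeq : hadamardInv (Matrix.vecMulVec lam nu + s • v)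
        = matA h1 (fun i => -(lam i)) * oneB (s • Cb lam nu v s)
            * matB h1 (fun j => -(nu j)) := by
      rw [← hk]
      calc hadamardInv (Matrix.vecMulVec lam nu + s • v)
          = (matA h1 (fun i => -(lam i)) * matA h1 lam)
              * hadamardInv (Matrix.vecMulVec lam nu + s • v)
              * (matB h1 nu * matB h1 (fun j => -(nu j))) := by
            rw [matA_neg_mul, matB_mul_neg, one_mul, mul_one]
        _ = _ := by simp only [Matrix.mul_assoc]
    have hAu : IsUnit (matA h1 (fun i => -(lam i))) :=
      ⟨⟨_, matA h1 lam, matA_neg_mul h1 lam, matA_mul_neg h1 lam⟩, rfl⟩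
    have hBu : IsUnit (matB h1 (fun j => -(nu j))) :=
      ⟨⟨_, matB h1 nu, matB_neg_mul h1 nu, matB_mul_neg h1 nu⟩, rfl⟩
    constructor
    · rw [hJeq]
      exact (hAu.mul (isUnit_oneB hsCu)).mul hBu
    · have hinvJ : (hadamardInv (Matrix.vecMulVec lam nu + s • v))⁻¹
          = matB h1 nu * (oneB (s⁻¹ • (Cb lam nu v s)⁻¹) * matA h1 lam) := by
        rw [hJeq, Matrix.mul_inv_rev, Matrix.mul_inv_rev,
          Matrix.inv_eq_right_inv (matB_neg_mul h1 nu),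
          Matrix.inv_eq_right_inv (matA_neg_mul h1 lam),
          oneB_inv hsCu, msmul_inv hs hCu]
      rw [hinvJ, ← Matrix.mul_assoc]
      have hsm : s • (matB h1 nu * oneB (s⁻¹ • (Cb lam nu v s)⁻¹) * matA h1 lam)
          = matB h1 nu * (s • oneB (s⁻¹ • (Cb lam nu v s)⁻¹)) * matA h1 lam := by
        rw [Matrix.mul_smul, Matrix.smul_mul]
      rw [hsm, smul_oneB hq s hs]
  -- extract ε
  obtain ⟨ε, hε, hball⟩ := Metric.eventually_nhds_iff.mp hev
  refine ⟨ε, hε, fun s hs1 hs2 => ?_, ?_⟩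
  · have hs : s ≠ 0 := norm_pos_iff.mp hs1
    have hy := hball (show dist s 0 < ε by rwa [dist_zero_right])
    obtain ⟨hu, -⟩ := main s hs hy.1 hy.2
    refine ⟨fun i j => ?_, hu⟩
    have := hy.1 i j
    simpa [Matrix.vecMulVec_apply, Matrix.add_apply, Matrix.smul_apply, smul_eq_mul]
      using this
  · -- the limit
    have hcorner : Tendsto
        (fun s : ℂ => Matrix.of (fun i j : Fin (p+2) => if i = 0 ∧ j = 0 then s else 0))
        (𝓝 0) (𝓝 (0 : Matrix (Fin (p+2)) (Fin (p+2)) ℂ)) := by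
      refine tendsto_pi_nhds.2 fun i => tendsto_pi_nhds.2 fun j => ?_
      by_cases h : i = 0 ∧ j = 0
      · simp only [Matrix.of_apply, if_pos h, Matrix.zero_apply]
        exact tendsto_id
      · simp [h]
    have hmatW : Tendsto (fun s : ℂ => matW hq ((Cb lam nu v s)⁻¹)) (𝓝 0)
        (𝓝 (matW hq ((Cb lam nu v 0)⁻¹))) := by
      refine tendsto_pi_nhds.2 fun i => tendsto_pi_nhds.2 fun j => ?_
      simp only [matW, Matrix.of_apply]
      by_cases h : i.1 = 0 ∨ j.1 = 0
      · split_ifs with h'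
        exact tendsto_const_nhds
      · simp only [h, if_false]
        exact tendsto_pi_nhds.1 (tendsto_pi_nhds.1 hinvc _) _
    have hFc : Continuous (fun Y : Matrix (Fin (p+2)) (Fin (p+2)) ℂ =>
        matB h1 nu * Y * matA h1 lam) :=
      (continuous_const.matrix_mul continuous_id).matrix_mul continuous_const
    have htend : Tendsto (fun s : ℂ =>
        matB h1 nu * (Matrix.of (fun i j : Fin (p+2) => if i = 0 ∧ j = 0 then s else 0)
          + matW hq ((Cb lam nu v s)⁻¹)) * matA h1 lam) (𝓝 0)
        (𝓝 (matB h1 nu * ((0:Matrix (Fin (p+2)) (Fin (p+2)) ℂ)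
          + matW hq ((Cb lam nu v 0)⁻¹)) * matA h1 lam)) :=
      (hFc.tendsto _).comp (hcorner.add hmatW)
    rw [zero_add, hC0] at htend
    have heq : ∀ᶠ s in 𝓝[≠] (0:ℂ),
        (fun s : ℂ =>
          matB h1 nu * (Matrix.of (fun i j : Fin (p+2) => if i = 0 ∧ j = 0 then s else 0)
            + matW hq ((Cb lam nu v s)⁻¹)) * matA h1 lam) s
        = s • (hadamardInv (Matrix.vecMulVec lam nu + s • v))⁻¹ := by
      filter_upwards [eventually_nhdsWithin_of_eventually_nhds hev,
        self_mem_nhdsWithin] with s h hs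
      exact ((main s hs h.1 h.2).2).symm
    exact (Filter.Tendsto.congr' heq (htend.mono_left nhdsWithin_le_nhds))
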